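/- Let C be an essentially small triangulated category, S a dense complete full subcategory of C, and g(S) the subgroup of K0(C) generated by {[A] : A ∈ S}. Then an object A of C belongs to S if and only if [A] ∈ g(S). -/

import Mathlib

/-!
Grothendieck groups of essentially small triangulated categories.

`K0 C` is the quotient of the free abelian group on the isomorphism classes of objects
of `C` by the subgroup generated by the Euler relations `⟨X⟩ - ⟨Y⟩ + ⟨Z⟩` coming from
distinguished triangles `X ⟶ Y ⟶ Z ⟶ X⟦1⟧`; `K0.mk C A` is the class `[A]`.
A full subcategory (identified with its set of objects) is *dense* if every object of `C`
is a direct summand of an object of the subcategory, and *complete* if whenever two of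
the three objects of a distinguished triangle lie in it, so does the third.
-/

open CategoryTheory CategoryTheory.Limits CategoryTheory.Pretriangulated ZeroObject

universe w v u

namespace TriK0

variable (C : Type u) [Category.{v} C] [HasZeroObject C] [Preadditive C] [HasShift C ℤ]
  [∀ n : ℤ, (shiftFunctor C n).Additive] [Pretriangulated C]

/-- The isomorphism class of an object. -/
def isoCl (A : C) : Quotient (isIsomorphicSetoid C) := Quotient.mk (isIsomorphicSetoid C) A

/-- The subgroup of Euler relations coming from distinguished triangles. -/
def K0Rels : AddSubgroup (FreeAbelianGroup (Quotient (isIsomorphicSetoid C))) :=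
  AddSubgroup.closure
    { x | ∃ T : Triangle C, T ∈ (distTriang C) ∧
        x = FreeAbelianGroup.of (isoCl C T.obj₁) - FreeAbelianGroup.of (isoCl C T.obj₂)
          + FreeAbelianGroup.of (isoCl C T.obj₃) }

/-- The Grothendieck group of the triangulated category `C`. -/
def K0 : Type u := FreeAbelianGroup (Quotient (isIsomorphicSetoid C)) ⧸ K0Rels C

noncomputable instance : AddCommGroup (K0 C) :=
  QuotientAddGroup.Quotient.addCommGroup _

/-- The class `[A]` of an object `A` in the Grothendieck group. -/
def K0.mk (A : C) : K0 C := QuotientAddGroup.mk (FreeAbelianGroup.of (isoCl C A))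

/-- A full subcategory is dense if every object of `C` is a direct summand of an object
of the subcategory. -/
noncomputable def DenseSub (S : Set C) : Prop :=
  ∀ A : C, ∃ X ∈ S, ∃ A' : C, Nonempty (X ≅ A ⊞ A')

/-- A full subcategory is complete if, in any distinguished triangle, whenever two of the
three objects belong to the subcategory, so does the third. -/
def CompleteSub (S : Set C) : Prop :=
  ∀ T ∈ (distTriang C),
    (T.obj₁ ∈ S → T.obj₂ ∈ S → T.obj₃ ∈ S) ∧
    (T.obj₁ ∈ S → T.obj₃ ∈ S → T.obj₂ ∈ S) ∧
    (T.obj₂ ∈ S → T.obj₃ ∈ S → T.obj₁ ∈ S)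

end TriK0

open TriK0

/-!
Call `A` and `B` stably isomorphic if `A ⊞ P ≅ B ⊞ Q` for some `P, Q ∈ S`. Under `⊞` the
stable classes form an abelian group, with `[0]` as zero and `[A⟦1⟧]` as the negative of `[A]`
since density and completeness force `A⟦1⟧ ⊞ A ∈ S`. Adding to a distinguished triangle
`X ⟶ Y ⟶ Z ⟶ X⟦1⟧` the split triangle `X' ⟶ X' ⊞ Z' ⟶ Z' ⟶ X'⟦1⟧`, where `X ⊞ X'` and
`Z ⊞ Z'` lie in `S`, shows that the class of `Y` is the sum of those of `X` and `Z`. Hence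
`A ↦ [A]` factors through `K₀(C)` and kills `g(S)`, while a stable class vanishes exactly on `S`.
-/

namespace TriK0

section Biprod

variable {D : Type*} [Category D] [HasZeroMorphisms D] [HasBinaryBiproducts D]

noncomputable def biprodShuffle (a b c d : D) : (a ⊞ b) ⊞ (c ⊞ d) ≅ (a ⊞ c) ⊞ (b ⊞ d) :=
  biprod.associator a b (c ⊞ d) ≪≫
    biprod.mapIso (Iso.refl a)
      ((biprod.associator b c d).symm ≪≫ biprod.mapIso (biprod.braiding b c) (Iso.refl d) ≪≫
        biprod.associator c b d) ≪≫
    (biprod.associator a c (b ⊞ d)).symm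

end Biprod

variable {C : Type u} [Category.{v} C] [HasZeroObject C] [Preadditive C] [HasShift C ℤ]
  [∀ n : ℤ, (shiftFunctor C n).Additive] [Pretriangulated C]

attribute [local instance] preservesBinaryBiproducts_of_preservesBiproducts

lemma exists_distinguished_biprod (T₁ T₂ : Triangle C) (h₁ : T₁ ∈ distTriang C)
    (h₂ : T₂ ∈ distTriang C) :
    ∃ T ∈ distTriang C, Nonempty (T.obj₁ ≅ T₁.obj₁ ⊞ T₂.obj₁) ∧
      Nonempty (T.obj₂ ≅ T₁.obj₂ ⊞ T₂.obj₂) ∧ Nonempty (T.obj₃ ≅ T₁.obj₃ ⊞ T₂.obj₃) := by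
  have e : ∀ F : Triangle C ⥤ C,
      ∏ᶜ (fun j => F.obj (pairFunction T₁ T₂ j)) ≅ F.obj T₁ ⊞ F.obj T₂ := fun F =>
    HasLimit.isoOfNatIso (diagramIsoPair _) ≪≫ (biprod.isoProd _ _).symm
  refine ⟨productTriangle (pairFunction T₁ T₂),
    productTriangle_distinguished _ (by rintro (_ | _) <;> assumption),
    ⟨e Triangle.π₁⟩, ⟨e Triangle.π₂⟩, ⟨e Triangle.π₃⟩⟩

namespace K0

variable {G : Type*} [AddCommGroup G] (f : C → G) (hiso : ∀ {A B : C}, (A ≅ B) → f A = f B)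
  (htri : ∀ T ∈ distTriang C, f T.obj₁ - f T.obj₂ + f T.obj₃ = 0)

noncomputable def lift : K0 C →+ G :=
  QuotientAddGroup.lift (K0Rels C)
    (FreeAbelianGroup.lift (Quotient.lift f fun _ _ h => hiso h.some)) (by
      rw [K0Rels, AddSubgroup.closure_le]
      rintro _ ⟨T, hT, rfl⟩
      simpa [isoCl] using htri T hT)

lemma lift_mk (A : C) : lift f hiso htri (K0.mk C A) = f A :=
  (QuotientAddGroup.lift_mk _ _ _).trans (FreeAbelianGroup.lift_apply_of _ _)

end K0

variable {S : Set C}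

namespace CompleteSub

lemma zero_mem (hc : CompleteSub C S) {B : C} (hB : B ∈ S) : (0 : C) ∈ S :=
  (hc _ (contractible_distinguished B)).1 hB hB

lemma mem_of_iso (hc : CompleteSub C S) {A B : C} (e : A ≅ B) (hB : B ∈ S) : A ∈ S := by
  have hT : Triangle.mk e.hom (0 : B ⟶ 0) 0 ∈ distTriang C :=
    isomorphic_distinguished _ (contractible_distinguished B) _
      (Triangle.isoMk _ _ e (Iso.refl _) (Iso.refl _) rfl (zero_comp.trans comp_zero.symm)
        (zero_comp.trans comp_zero.symm))
  exact (hc _ hT).2.2 hB (hc.zero_mem hB)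

lemma shift_mem_iff (hc : CompleteSub C S) {A : C} : A⟦(1 : ℤ)⟧ ∈ S ↔ A ∈ S := by
  have hT := hc _ (rot_of_distTriang _ (contractible_distinguished A))
  exact ⟨fun h => hT.2.2 (hc.zero_mem h) h, fun h => hT.1 h (hc.zero_mem h)⟩

lemma biprod_mem (hc : CompleteSub C S) {A B : C} (hA : A ∈ S) (hB : B ∈ S) : (A ⊞ B) ∈ S :=
  (hc _ (binaryBiproductTriangle_distinguished A B)).2.1 hA hB

lemma mem_of_biprod_mem (hc : CompleteSub C S) {A B : C} (hAB : (A ⊞ B) ∈ S) (hB : B ∈ S) :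
    A ∈ S :=
  (hc _ (binaryBiproductTriangle_distinguished A B)).2.2 hAB hB

lemma biprod_obj₂_mem (hc : CompleteSub C S) {T₁ T₂ : Triangle C} (hT₁ : T₁ ∈ distTriang C)
    (hT₂ : T₂ ∈ distTriang C) (h₁ : (T₁.obj₁ ⊞ T₂.obj₁) ∈ S) (h₃ : (T₁.obj₃ ⊞ T₂.obj₃) ∈ S) :
    (T₁.obj₂ ⊞ T₂.obj₂) ∈ S := by
  obtain ⟨T, hT, ⟨e₁⟩, ⟨e₂⟩, ⟨e₃⟩⟩ := exists_distinguished_biprod T₁ T₂ hT₁ hT₂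
  exact hc.mem_of_iso e₂.symm ((hc T hT).2.1 (hc.mem_of_iso e₁ h₁) (hc.mem_of_iso e₃ h₃))

lemma biprod_obj₃_mem (hc : CompleteSub C S) {T₁ T₂ : Triangle C} (hT₁ : T₁ ∈ distTriang C)
    (hT₂ : T₂ ∈ distTriang C) (h₁ : (T₁.obj₁ ⊞ T₂.obj₁) ∈ S) (h₂ : (T₁.obj₂ ⊞ T₂.obj₂) ∈ S) :
    (T₁.obj₃ ⊞ T₂.obj₃) ∈ S := by
  obtain ⟨T, hT, ⟨e₁⟩, ⟨e₂⟩, ⟨e₃⟩⟩ := exists_distinguished_biprod T₁ T₂ hT₁ hT₂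
  exact hc.mem_of_iso e₃.symm ((hc T hT).1 (hc.mem_of_iso e₁ h₁) (hc.mem_of_iso e₂ h₂))

end CompleteSub

namespace DenseSub

lemma exists_biprod_mem (hd : DenseSub C S) (hc : CompleteSub C S) (A : C) :
    ∃ A' : C, (A ⊞ A') ∈ S := by
  obtain ⟨X, hX, A', ⟨e⟩⟩ := hd A
  exact ⟨A', hc.mem_of_iso e.symm hX⟩

lemma zero_mem (hd : DenseSub C S) (hc : CompleteSub C S) : (0 : C) ∈ S := by
  obtain ⟨_, h⟩ := hd.exists_biprod_mem hc 0
  exact hc.zero_mem h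

lemma shift_biprod_self_mem (hd : DenseSub C S) (hc : CompleteSub C S) (A : C) :
    (A⟦(1 : ℤ)⟧ ⊞ A) ∈ S := by
  obtain ⟨A', h⟩ := hd.exists_biprod_mem hc A
  refine hc.biprod_obj₃_mem (rot_of_distTriang _ (contractible_distinguished A))
    (binaryBiproductTriangle_distinguished A' A) h ?_
  exact hc.mem_of_iso ((isoZeroBiprod (isZero_zero C)).symm ≪≫ biprod.braiding A' A) h

end DenseSub

def StablyIso (S : Set C) (A B : C) : Prop :=
  ∃ P ∈ S, ∃ Q ∈ S, Nonempty (A ⊞ P ≅ B ⊞ Q)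

namespace StablyIso

lemma of_iso (hd : DenseSub C S) (hc : CompleteSub C S) {A B : C} (e : A ≅ B) :
    StablyIso S A B :=
  ⟨0, hd.zero_mem hc, 0, hd.zero_mem hc, ⟨biprod.mapIso e (Iso.refl _)⟩⟩

lemma symm {A B : C} (h : StablyIso S A B) : StablyIso S B A := by
  obtain ⟨P, hP, Q, hQ, ⟨e⟩⟩ := h
  exact ⟨Q, hQ, P, hP, ⟨e.symm⟩⟩

lemma trans (hc : CompleteSub C S) {A B D : C} (h₁ : StablyIso S A B)
    (h₂ : StablyIso S B D) : StablyIso S A D := by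
  obtain ⟨P, hP, Q, hQ, ⟨e⟩⟩ := h₁
  obtain ⟨P', hP', Q', hQ', ⟨f⟩⟩ := h₂
  refine ⟨P ⊞ P', hc.biprod_mem hP hP', Q' ⊞ Q, hc.biprod_mem hQ' hQ, ⟨?_⟩⟩
  calc A ⊞ (P ⊞ P') ≅ (A ⊞ P) ⊞ P' := (biprod.associator _ _ _).symm
    _ ≅ (B ⊞ Q) ⊞ P' := biprod.mapIso e (Iso.refl _)
    _ ≅ B ⊞ (Q ⊞ P') := biprod.associator _ _ _
    _ ≅ B ⊞ (P' ⊞ Q) := biprod.mapIso (Iso.refl _) (biprod.braiding _ _)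
    _ ≅ (B ⊞ P') ⊞ Q := (biprod.associator _ _ _).symm
    _ ≅ (D ⊞ Q') ⊞ Q := biprod.mapIso f (Iso.refl _)
    _ ≅ D ⊞ (Q' ⊞ Q) := biprod.associator _ _ _

lemma biprod (hc : CompleteSub C S) {A B A' B' : C} (h : StablyIso S A B)
    (h' : StablyIso S A' B') : StablyIso S (A ⊞ A') (B ⊞ B') := by
  obtain ⟨P, hP, Q, hQ, ⟨e⟩⟩ := h
  obtain ⟨P', hP', Q', hQ', ⟨f⟩⟩ := h'
  exact ⟨P ⊞ P', hc.biprod_mem hP hP', Q ⊞ Q', hc.biprod_mem hQ hQ',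
    ⟨biprodShuffle _ _ _ _ ≪≫ biprod.mapIso e f ≪≫ biprodShuffle _ _ _ _⟩⟩

lemma shift (hc : CompleteSub C S) {A B : C} (h : StablyIso S A B) :
    StablyIso S (A⟦(1 : ℤ)⟧) (B⟦(1 : ℤ)⟧) := by
  obtain ⟨P, hP, Q, hQ, ⟨e⟩⟩ := h
  refine ⟨P⟦(1 : ℤ)⟧, hc.shift_mem_iff.2 hP, Q⟦(1 : ℤ)⟧, hc.shift_mem_iff.2 hQ, ⟨?_⟩⟩
  exact ((shiftFunctor C (1 : ℤ)).mapBiprod A P).symm ≪≫ (shiftFunctor C (1 : ℤ)).mapIso e ≪≫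
    (shiftFunctor C (1 : ℤ)).mapBiprod B Q

end StablyIso

lemma stablyIso_zero_iff (hc : CompleteSub C S) {A : C} : StablyIso S A 0 ↔ A ∈ S := by
  constructor
  · rintro ⟨P, hP, Q, hQ, ⟨e⟩⟩
    exact hc.mem_of_biprod_mem (hc.mem_of_iso (e ≪≫ (isoZeroBiprod (isZero_zero C)).symm) hQ) hP
  · intro hA
    exact ⟨0, hc.zero_mem hA, A, hA,
      ⟨(isoBiprodZero (isZero_zero C)).symm ≪≫ isoZeroBiprod (isZero_zero C)⟩⟩

def stablyIsoSetoid (hd : DenseSub C S) (hc : CompleteSub C S) : Setoid C :=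
  ⟨StablyIso S, ⟨fun A => .of_iso hd hc (Iso.refl A), .symm, .trans hc⟩⟩

def StableClass (hd : DenseSub C S) (hc : CompleteSub C S) : Type u :=
  Quotient (stablyIsoSetoid hd hc)

namespace StableClass

variable (hd : DenseSub C S) (hc : CompleteSub C S)

def mk (A : C) : StableClass hd hc := Quotient.mk _ A

noncomputable instance : AddCommGroup (StableClass hd hc) := by
  letI : Zero (StableClass hd hc) := ⟨mk hd hc 0⟩
  letI : Add (StableClass hd hc) :=
    ⟨Quotient.map₂ (fun A B => A ⊞ B) (fun _ _ h _ _ h' => StablyIso.biprod hc h h')⟩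
  letI : Neg (StableClass hd hc) :=
    ⟨Quotient.map (fun A => A⟦(1 : ℤ)⟧) (fun _ _ h => StablyIso.shift hc h)⟩
  exact
  { nsmul := nsmulRec
    zsmul := zsmulRec
    add_assoc := by
      rintro ⟨A⟩ ⟨B⟩ ⟨D⟩
      exact Quotient.sound (.of_iso hd hc (biprod.associator A B D))
    zero_add := by
      rintro ⟨A⟩
      exact Quotient.sound (.of_iso hd hc (isoZeroBiprod (isZero_zero C)).symm)
    add_zero := by
      rintro ⟨A⟩
      exact Quotient.sound (.of_iso hd hc (isoBiprodZero (isZero_zero C)).symm)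
    add_comm := by
      rintro ⟨A⟩ ⟨B⟩
      exact Quotient.sound (.of_iso hd hc (biprod.braiding A B))
    neg_add_cancel := by
      rintro ⟨A⟩
      exact Quotient.sound ((stablyIso_zero_iff hc).2 (hd.shift_biprod_self_mem hc A)) }

lemma mk_biprod (A B : C) : mk hd hc (A ⊞ B) = mk hd hc A + mk hd hc B := rfl

lemma mk_eq_of_iso {A B : C} (e : A ≅ B) : mk hd hc A = mk hd hc B :=
  Quotient.sound (.of_iso hd hc e)

lemma mk_eq_zero_iff {A : C} : mk hd hc A = 0 ↔ A ∈ S :=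
  Quotient.eq.trans (stablyIso_zero_iff hc)

lemma mk_sub_mk_add_mk {T : Triangle C} (hT : T ∈ distTriang C) :
    mk hd hc T.obj₁ - mk hd hc T.obj₂ + mk hd hc T.obj₃ = 0 := by
  obtain ⟨X', hX⟩ := hd.exists_biprod_mem hc T.obj₁
  obtain ⟨Z', hZ⟩ := hd.exists_biprod_mem hc T.obj₃
  have hY : (T.obj₂ ⊞ (X' ⊞ Z')) ∈ S :=
    hc.biprod_obj₂_mem hT (binaryBiproductTriangle_distinguished X' Z') hX hZ
  rw [← mk_eq_zero_iff hd hc, mk_biprod] at hX hZ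
  rw [← mk_eq_zero_iff hd hc, mk_biprod, mk_biprod] at hY
  calc _ = (mk hd hc T.obj₁ + mk hd hc X') + (mk hd hc T.obj₃ + mk hd hc Z')
        - (mk hd hc T.obj₂ + (mk hd hc X' + mk hd hc Z')) := by abel
    _ = 0 := by rw [hX, hZ, hY, add_zero, sub_zero]

end StableClass

noncomputable def K0.toStableClass (hd : DenseSub C S) (hc : CompleteSub C S) :
    K0 C →+ StableClass hd hc :=
  K0.lift (StableClass.mk hd hc) (StableClass.mk_eq_of_iso hd hc)
    (fun _ hT => StableClass.mk_sub_mk_add_mk hd hc hT)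

end TriK0

/-- For a dense complete full subcategory `S`, an object `A` belongs to `S` if and only
if `[A]` lies in the subgroup `g(S) = ⟨[B] : B ∈ S⟩` of `K₀(C)`. -/
theorem mem_iff_class_mem_subgroup
    (C : Type u) [Category.{v} C] [HasZeroObject C] [Preadditive C] [HasShift C ℤ]
    [∀ n : ℤ, (shiftFunctor C n).Additive] [Pretriangulated C] [EssentiallySmall.{w} C]
    (S : Set C) (hdense : DenseSub C S) (hcomplete : CompleteSub C S) (A : C) :
    A ∈ S ↔ K0.mk C A ∈ AddSubgroup.closure (K0.mk C '' S) := by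
  have hmk (B : C) : K0.toStableClass hdense hcomplete (K0.mk C B) = 0 ↔ B ∈ S := by
    rw [K0.toStableClass, K0.lift_mk, StableClass.mk_eq_zero_iff]
  have hS : AddSubgroup.closure (K0.mk C '' S) ≤ (K0.toStableClass hdense hcomplete).ker := by
    rw [AddSubgroup.closure_le]
    rintro _ ⟨B, hB, rfl⟩
    exact (hmk B).2 hB
  exact ⟨fun hA => AddSubgroup.subset_closure ⟨A, hA, rfl⟩, fun hA => (hmk A).1 (hS hA)⟩
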